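/- arXiv:2008.04252 — 3 statements merged into one kernel-verified Lean document; each statement's English description precedes it below -/
import Mathlib

section
/- Consider a process on a finite set of tokens where in each round tokens may die but no new token is ever created after time t₀, at least one token is always alive, and from time t₀ onward a token covering all n nodes never dies. If each surviving token among at least two alive has probability at least p > 0 of dying or becoming all-covering within each window of W rounds (independently across windows), then with probability 1 the process eventually reaches a state with exactly one alive token, which covers all nodes. -/
open MeasureTheory

/-!
As long as at least two tokens are alive, a fixed token survives each window without becoming
all-covering with probability at most `1 - p`, so the event "at least two tokens alive at time
`i`, `k` among them" has probability at most `(1 - p) ^ i`. Summing over the finitely many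
tokens, the event that two tokens stay alive forever is null. On its complement some time has a
single alive token, which covers all nodes, and covering tokens persist and remain unique.
-/

section Deterministic

variable {K : Type*} {s : ℕ → Finset K} {c : K → ℕ → Prop}

theorem eq_singleton_and_of_le (huniq : ∀ i k, c k i → s i = {k})
    (hsingle : ∀ i k, s i = {k} → c k i) (hpersist : ∀ i k, c k i → c k (i + 1))
    {i : ℕ} {k : K} (hk : s i = {k}) {j : ℕ} (hij : i ≤ j) : s j = {k} ∧ c k j := by
  have hc : c k j := by
    induction j, hij using Nat.le_induction with
    | base => exact hsingle i k hk
    | succ j _ ih => exact hpersist j k ih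
  exact ⟨huniq j k hc, hc⟩

theorem two_le_card_of_not_eventually_singleton (hne : ∀ i, (s i).Nonempty)
    (huniq : ∀ i k, c k i → s i = {k}) (hsingle : ∀ i k, s i = {k} → c k i)
    (hpersist : ∀ i k, c k i → c k (i + 1))
    (h : ¬ ∃ i k, ∀ j, i ≤ j → s j = {k} ∧ c k j) (i : ℕ) : 2 ≤ (s i).card := by
  by_contra! hlt
  obtain ⟨k, hk⟩ : ∃ k, s i = {k} :=
    Finset.card_eq_one.mp (le_antisymm (Nat.lt_succ_iff.mp hlt) (hne i).card_pos)
  exact h ⟨i, k, fun j hij => eq_singleton_and_of_le huniq hsingle hpersist hk hij⟩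

end Deterministic

section Decay

variable {Ω : Type*} [MeasurableSpace Ω] {μ : Measure Ω}

theorem measure_le_pow_mul_of_le_mul {A : ℕ → Set Ω} {r : ENNReal}
    (h : ∀ i, μ (A (i + 1)) ≤ r * μ (A i)) (i : ℕ) : μ (A i) ≤ r ^ i * μ (A 0) := by
  induction i with
  | zero => simp
  | succ i ih =>
    calc μ (A (i + 1)) ≤ r * μ (A i) := h i
      _ ≤ r * (r ^ i * μ (A 0)) := mul_le_mul_right ih r
      _ = r ^ (i + 1) * μ (A 0) := by rw [pow_succ', mul_assoc]

theorem measure_eq_zero_of_le_const_mul_pow {s : Set Ω} {C r : ENNReal} (hC : C ≠ ⊤)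
    (hr : r < 1) (h : ∀ i : ℕ, μ s ≤ C * r ^ i) : μ s = 0 := by
  have htend : Filter.Tendsto (fun i : ℕ => C * r ^ i) Filter.atTop (nhds 0) := by
    simpa using ENNReal.Tendsto.const_mul (ENNReal.tendsto_pow_atTop_nhds_zero_of_lt_one hr)
      (Or.inr hC)
  exact le_antisymm (ge_of_tendsto' htend h) bot_le

theorem measure_eq_one_of_measure_compl_eq_zero [IsProbabilityMeasure μ] {s : Set Ω}
    (h : μ sᶜ = 0) : μ s = 1 := by
  refine le_antisymm prob_le_one ?_
  simpa [h] using measure_univ_le_add_compl (μ := μ) s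

end Decay

section Tokens

variable {Ω K : Type*} {S : ℕ → Ω → Finset K} {Cover : K → ℕ → Ω → Prop}

theorem setOf_contested_succ_subset (hmono : ∀ i ω, S (i + 1) ω ⊆ S i ω)
    (huniq : ∀ i ω k, Cover k i ω → S i ω = {k}) (i : ℕ) (k : K) :
    {ω | 2 ≤ (S (i + 1) ω).card ∧ k ∈ S (i + 1) ω} ⊆
      {ω | 2 ≤ (S i ω).card ∧ k ∈ S i ω ∧ k ∈ S (i + 1) ω ∧ ¬ Cover k (i + 1) ω} := by
  rintro ω ⟨h2, hk⟩
  refine ⟨h2.trans (Finset.card_le_card (hmono i ω)), hmono i ω hk, hk, fun hc => ?_⟩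
  simp [huniq _ _ _ hc] at h2

theorem measure_forall_two_le_card_le [Fintype K] [MeasurableSpace Ω] {μ : Measure Ω}
    (hne : ∀ i ω, (S i ω).Nonempty) {r : ENNReal}
    (hk : ∀ i k, μ {ω | 2 ≤ (S i ω).card ∧ k ∈ S i ω} ≤ r ^ i) (i : ℕ) :
    μ {ω | ∀ i, 2 ≤ (S i ω).card} ≤ Fintype.card K * r ^ i := by
  have hcover : {ω | ∀ i, 2 ≤ (S i ω).card} ⊆ ⋃ k, {ω | 2 ≤ (S i ω).card ∧ k ∈ S i ω} := by
    intro ω hω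
    obtain ⟨k, hk⟩ := hne i ω
    exact Set.mem_iUnion.mpr ⟨k, hω i, hk⟩
  calc μ {ω | ∀ i, 2 ≤ (S i ω).card}
      ≤ ∑ k, μ {ω | 2 ≤ (S i ω).card ∧ k ∈ S i ω} :=
        (measure_mono hcover).trans (measure_iUnion_fintype_le μ _)
    _ ≤ ∑ _k : K, r ^ i := Finset.sum_le_sum fun k _ => hk i k
    _ = Fintype.card K * r ^ i := by simp

end Tokens

theorem stmt_15_general {Ω : Type*} [MeasurableSpace Ω] (μ : Measure Ω) [IsProbabilityMeasure μ]
    {K : Type*} [Fintype K]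
    (S : ℕ → Ω → Finset K) (Cover : K → ℕ → Ω → Prop)
    (p : ℝ) (hp : 0 < p)
    -- no new token is ever created
    (hmono : ∀ i ω, S (i + 1) ω ⊆ S i ω)
    -- at least one token is always alive
    (hne : ∀ i ω, (S i ω).Nonempty)
    -- an all-covering token is the unique alive token
    (huniq : ∀ i ω k, Cover k i ω → S i ω = {k})
    -- a unique alive token covers all nodes
    (hsingle : ∀ i ω k, S i ω = {k} → Cover k i ω)
    -- an all-covering token never dies and keeps covering
    (hpersist : ∀ i ω k, Cover k i ω → Cover k (i + 1) ω)
    -- each token among at least two alive dies or becomes all-covering with prob ≥ p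
    (hprob : ∀ i (k : K),
      μ {ω | 2 ≤ (S i ω).card ∧ k ∈ S i ω ∧ k ∈ S (i + 1) ω ∧ ¬ Cover k (i + 1) ω}
        ≤ ENNReal.ofReal (1 - p) * μ {ω | 2 ≤ (S i ω).card ∧ k ∈ S i ω}) :
    μ {ω | ∃ i k, ∀ j, i ≤ j → S j ω = {k} ∧ Cover k j ω} = 1 := by
  have hr : ENNReal.ofReal (1 - p) < 1 := ENNReal.ofReal_lt_one.mpr (by linarith)
  have hcontested : ∀ i k, μ {ω | 2 ≤ (S i ω).card ∧ k ∈ S i ω} ≤ ENNReal.ofReal (1 - p) ^ i :=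
    fun i k => (measure_le_pow_mul_of_le_mul
      (fun i => (measure_mono (setOf_contested_succ_subset hmono huniq i k)).trans (hprob i k))
      i).trans (mul_le_of_le_one_right' prob_le_one)
  have hforever : μ {ω | ∀ i, 2 ≤ (S i ω).card} = 0 :=
    measure_eq_zero_of_le_const_mul_pow (ENNReal.natCast_ne_top _) hr
      (measure_forall_two_le_card_le hne hcontested)
  refine measure_eq_one_of_measure_compl_eq_zero (measure_mono_null (fun ω hω => ?_) hforever)
  exact two_le_card_of_not_eventually_singleton (hne · ω) (huniq · ω) (hsingle · ω)
    (hpersist · ω) hω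

/-- Consider a process on a finite set of tokens where (after time `t₀`,
rescaled here to `0`, and with time measured in windows of `W` rounds) tokens may die but no
new token is ever created, at least one token is always alive, an all-covering token is the
unique alive token and never stops being an all-covering alive token, and a unique alive token
covers all nodes. If each surviving token among at least two alive has probability at least
`p > 0` of dying or becoming all-covering within each window (independently across windows, as
expressed by the conditional bound `hprob`), then with probability 1 the process eventually
reaches a state with exactly one alive token, which covers all nodes (and stays so). -/
theorem stmt_15 {Ω : Type*} [MeasurableSpace Ω] (μ : Measure Ω) [IsProbabilityMeasure μ]
    {K : Type*} [Fintype K] [DecidableEq K]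
    (S : ℕ → Ω → Finset K) (Cover : K → ℕ → Ω → Prop)
    (p : ℝ) (hp : 0 < p) (hp1 : p ≤ 1)
    -- no new token is ever created
    (hmono : ∀ i ω, S (i + 1) ω ⊆ S i ω)
    -- at least one token is always alive
    (hne : ∀ i ω, (S i ω).Nonempty)
    -- an all-covering token is the unique alive token
    (huniq : ∀ i ω k, Cover k i ω → S i ω = {k})
    -- a unique alive token covers all nodes
    (hsingle : ∀ i ω k, S i ω = {k} → Cover k i ω)
    -- an all-covering token never dies and keeps covering
    (hpersist : ∀ i ω k, Cover k i ω → Cover k (i + 1) ω)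
    -- each token among at least two alive dies or becomes all-covering with prob ≥ p
    (hprob : ∀ i (k : K),
      μ {ω | 2 ≤ (S i ω).card ∧ k ∈ S i ω ∧ k ∈ S (i + 1) ω ∧ ¬ Cover k (i + 1) ω}
        ≤ ENNReal.ofReal (1 - p) * μ {ω | 2 ≤ (S i ω).card ∧ k ∈ S i ω}) :
    μ {ω | ∃ i k, ∀ j, i ≤ j → S j ω = {k} ∧ Cover k j ω} = 1 :=
  stmt_15_general μ S Cover p hp hmono hne huniq hsingle hpersist hprob
end

section
/- Suppose each node of an n-node system receives at most a constant number c of 'discovery' messages during any time interval of length L, and each node must receive a discovery message strictly between any two 'retraction' messages it sends. Then during any time interval of length T ≥ L, the total number of discovery and retraction messages in the system is O(n · (T/L + 1)). -/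
/-!
A node's discoveries in a window of length `T` are covered by `T / L + 1` windows of length `L`,
so there are at most `c (T / L + 1)` of them. Its retractions are separated by discoveries, so
there is at most one more retraction than discovery in the window. Summing over the nodes gives
the bound with `A = 2c + 1`.
-/

open Finset

theorem Finset.card_le_card_add_one_of_separated {α : Type*} [LinearOrder α] (R D : Finset α)
    (hsep : ∀ r₁ ∈ R, ∀ r₂ ∈ R, r₁ < r₂ → ∃ s ∈ D, r₁ < s ∧ s < r₂) :
    #R ≤ #D + 1 := by
  classical
  induction R using Finset.induction_on_max generalizing D with
  | empty => simp
  | insert a S hlt ih =>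
    rcases S.eq_empty_or_nonempty with rfl | hS
    · simp
    obtain ⟨s, hsD, hmax, -⟩ :=
      hsep _ (mem_insert_of_mem (S.max'_mem hS)) a (mem_insert_self a S) (hlt _ (S.max'_mem hS))
    -- Witnesses for pairs inside `S` lie below `max' S < s`, so `s` can be spent on the new top `a`.
    have hsepS : ∀ r₁ ∈ S, ∀ r₂ ∈ S, r₁ < r₂ → ∃ s' ∈ D.erase s, r₁ < s' ∧ s' < r₂ := by
      intro r₁ h₁ r₂ h₂ hr
      obtain ⟨s', hs'D, h₁s', hs'₂⟩ := hsep r₁ (mem_insert_of_mem h₁) r₂ (mem_insert_of_mem h₂) hr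
      have hs' : s' < s := hs'₂.trans_le (S.le_max' r₂ h₂) |>.trans hmax
      exact ⟨s', mem_erase.mpr ⟨hs'.ne, hs'D⟩, h₁s', hs'₂⟩
    have hcardS := ih (D.erase s) hsepS
    have hD : 0 < #D := card_pos.mpr ⟨s, hsD⟩
    rw [card_erase_of_mem hsD] at hcardS
    rw [card_insert_of_notMem fun ha => (hlt a ha).false]
    omega

theorem card_filter_Ico_le_mul_div_add_one {c L : ℕ} (hL : 0 < L) (P : ℕ → Prop)
    [DecidablePred P] (hP : ∀ t, #((Ico t (t + L)).filter P) ≤ c) (t T : ℕ) :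
    #((Ico t (t + T)).filter P) ≤ c * (T / L + 1) := by
  have hwindows : ∀ k, #((Ico t (t + k * L)).filter P) ≤ c * k := by
    intro k
    induction k with
    | zero => simp
    | succ k ih =>
      rw [add_one_mul, ← add_assoc,
        ← Ico_union_Ico_eq_Ico (b := t + k * L) (by omega) (by omega), filter_union]
      calc _ ≤ _ := card_union_le _ _
        _ ≤ c * k + c := add_le_add ih (hP _)
        _ = c * (k + 1) := by ring
  refine (card_le_card (filter_subset_filter P (Ico_subset_Ico_right ?_))).trans
    (hwindows (T / L + 1))
  have := Nat.lt_div_mul_add (a := T) hL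
  rw [add_one_mul]
  omega

/-- Suppose each node of an `n`-node system receives at most a constant number
`c` of 'discovery' messages during any time interval of length `L`, and each node must receive
a discovery message strictly between any two 'retraction' messages it sends. Then during any
time interval of length `T ≥ L`, the total number of discovery and retraction messages in the
system is `O(n · (T/L + 1))` (with the constant `A` depending only on `c` and `L`). -/
theorem stmt_17 (c L : ℕ) (hL : 0 < L) :
    ∃ A : ℕ, ∀ (V : Type) [Fintype V], ∀ (disc retr : V → ℕ → Bool),
      (∀ (v : V) (t : ℕ),
        ((Finset.Ico t (t + L)).filter fun s => disc v s = true).card ≤ c) →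
      (∀ (v : V) (t₁ t₂ : ℕ), t₁ < t₂ → retr v t₁ = true → retr v t₂ = true →
        ∃ s, t₁ < s ∧ s < t₂ ∧ disc v s = true) →
      ∀ t T : ℕ, L ≤ T →
        (∑ v : V, (((Finset.Ico t (t + T)).filter fun s => disc v s = true).card +
                   ((Finset.Ico t (t + T)).filter fun s => retr v s = true).card))
          ≤ A * Fintype.card V * (T / L + 1) := by
  refine ⟨2 * c + 1, fun V _ disc retr hdisc hretr t T _ => ?_⟩
  have hnode : ∀ v : V, #((Ico t (t + T)).filter fun s => disc v s = true) +
      #((Ico t (t + T)).filter fun s => retr v s = true) ≤ (2 * c + 1) * (T / L + 1) := by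
    intro v
    have hd := card_filter_Ico_le_mul_div_add_one hL _ (hdisc v) t T
    have hr := card_le_card_add_one_of_separated
      ((Ico t (t + T)).filter fun s => retr v s = true)
      ((Ico t (t + T)).filter fun s => disc v s = true) fun r₁ h₁ r₂ h₂ hr => by
        simp only [mem_filter, mem_Ico] at h₁ h₂
        obtain ⟨s, h₁s, hs₂, hs⟩ := hretr v r₁ r₂ hr h₁.2 h₂.2
        exact ⟨s, mem_filter.mpr ⟨mem_Ico.mpr ⟨by omega, by omega⟩, hs⟩, h₁s, hs₂⟩
    have hq : 1 ≤ T / L + 1 := Nat.le_add_left 1 _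
    linarith
  calc _ ≤ #(univ : Finset V) • ((2 * c + 1) * (T / L + 1)) :=
        sum_le_card_nsmul _ _ _ fun v _ => hnode v
    _ = (2 * c + 1) * Fintype.card V * (T / L + 1) := by rw [card_univ, smul_eq_mul]; ring
end

section
/- Let T be a rooted tree and suppose each node v ≠ x on the unique simple path P from the root r to a node x stores a pointer out_prop(v) to its successor on P, while all other nodes store ⊥. If the root role is transferred sequentially along P — each node v on P, upon becoming root, makes its successor w = out_prop(v) its parent's replacement by setting prnt(v) := w and removing w from its children, while w sets prnt(w) := ⊥ and adds v to its children — then after processing all nodes of P the resulting parent/children structure is that of the same tree T re-rooted at x. -/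
open Classical

/-- The parent pointers after transferring the root role sequentially from `r` down the path
marked by the `out_prop` pointers to `x`: each node `v` on the path (other than `x`) now has
its path-successor `out_prop v` as its parent, `x` becomes the root, and all other parent
pointers are unchanged. -/
noncomputable def newPrnt {V : Type*} (prnt out_prop : V → Option V) (r x : V) (v : V) :
    Option V :=
  if Relation.ReflTransGen (fun a b => out_prop a = some b) r v then
    (if v = x then none else out_prop v)
  else prnt v

/-!
The path `P` is the `out_prop`-chain from `r` to `x`. Since `out_prop` is a function and `x` is
the end of that chain, every node of `P` reaches `x` along it, so after the transfer every node of
`P` reaches `x` through the new parent pointers, and every other node first climbs the old parent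
pointers until it meets `P` (at the latest at `r`). The edges are preserved because an edge leaving
`P` is unchanged, while an edge `v — w` of `P` with `out_prop v = w` is the old edge `prnt w = v`,
now oriented as `newPrnt v = w`; conversely the old parent of a node `w ≠ r` of `P` is its
predecessor on `P`.
-/

open Relation

namespace RootTransfer

variable {V : Type*}

abbrev PointsTo (f : V → Option V) (a b : V) : Prop := f a = some b

theorem rightUnique_pointsTo (f : V → Option V) : Relator.RightUnique (PointsTo f) :=
  fun _ _ _ hb hc => Option.some.inj (hb.symm.trans hc)

theorem reflTransGen_pointsTo_end {f : V → Option V} {r v x : V} (hx : f x = none)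
    (hrx : ReflTransGen (PointsTo f) r x) (hrv : ReflTransGen (PointsTo f) r v) :
    ReflTransGen (PointsTo f) v x := by
  rcases hrv.total_of_right_unique (rightUnique_pointsTo f) hrx with hvx | hxv
  · exact hvx
  · rcases hxv.cases_head with rfl | ⟨_, hxc, _⟩
    · rfl
    · simp [PointsTo, hx] at hxc

variable {prnt out_prop : V → Option V} {r x : V}

theorem newPrnt_eq (hxend : out_prop x = none) (v : V) :
    newPrnt prnt out_prop r x v =
      if ReflTransGen (PointsTo out_prop) r v then out_prop v else prnt v := by
  unfold newPrnt
  split_ifs with _ hvx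
  · rw [hvx, hxend]
  · rfl
  · rfl

theorem reflTransGen_newPrnt_of_onPath (hxend : out_prop x = none)
    (hpath : ReflTransGen (PointsTo out_prop) r x) {v : V}
    (hv : ReflTransGen (PointsTo out_prop) r v) :
    ReflTransGen (PointsTo (newPrnt prnt out_prop r x)) v x := by
  induction reflTransGen_pointsTo_end hxend hpath hv using ReflTransGen.head_induction_on with
  | refl => rfl
  | head hab _ ih =>
    refine .head ?_ (ih (hv.tail hab))
    rw [PointsTo, newPrnt_eq hxend, if_pos hv]
    exact hab

theorem reflTransGen_newPrnt (hxend : out_prop x = none)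
    (hpath : ReflTransGen (PointsTo out_prop) r x)
    (htree : ∀ v, ReflTransGen (PointsTo prnt) v r) (v : V) :
    ReflTransGen (PointsTo (newPrnt prnt out_prop r x)) v x := by
  induction htree v using ReflTransGen.head_induction_on with
  | refl => exact reflTransGen_newPrnt_of_onPath hxend hpath .refl
  | @head a c hac _ ih =>
    by_cases ha : ReflTransGen (PointsTo out_prop) r a
    · exact reflTransGen_newPrnt_of_onPath hxend hpath ha
    · refine .head ?_ ih
      rw [PointsTo, newPrnt_eq hxend, if_neg ha]
      exact hac

theorem prnt_of_newPrnt_eq_some (hxend : out_prop x = none)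
    (hchild : ∀ a b, out_prop a = some b → prnt b = some a) {a b : V}
    (h : newPrnt prnt out_prop r x a = some b) : prnt a = some b ∨ prnt b = some a := by
  rw [newPrnt_eq hxend] at h
  split_ifs at h
  · exact .inr (hchild a b h)
  · exact .inl h

theorem newPrnt_of_prnt_eq_some (hxend : out_prop x = none) (hroot : prnt r = none)
    (hchild : ∀ a b, out_prop a = some b → prnt b = some a) {a b : V}
    (h : prnt a = some b) :
    newPrnt prnt out_prop r x a = some b ∨ newPrnt prnt out_prop r x b = some a := by
  by_cases ha : ReflTransGen (PointsTo out_prop) r a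
  · rcases ha.cases_tail with rfl | ⟨p, hrp, hpa⟩
    · simp [hroot] at h
    · obtain rfl : p = b := Option.some.inj ((hchild p a hpa).symm.trans h)
      right
      rw [newPrnt_eq hxend, if_pos hrp]
      exact hpa
  · left
    rw [newPrnt_eq hxend, if_neg ha]
    exact h

end RootTransfer

open RootTransfer in
/-- Let `T` be a rooted tree (encoded by parent pointers `prnt`, with root `r`)
and suppose each node `v ≠ x` on the unique simple path `P` from `r` to a node `x` stores a
pointer `out_prop v` to its successor on `P` (a child of `v`), while `x` stores `⊥`. If the
root role is transferred sequentially along `P` — each node `v` on `P` making its successor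
`w = out_prop v` its new parent while `w` becomes the new root — then after processing all
nodes of `P` the resulting parent/children structure is that of the same tree `T` re-rooted at
`x`: `x` is the root, every node reaches `x` by following the new parent pointers, and the
underlying undirected edges are unchanged. -/
theorem stmt_18 {V : Type*} (prnt out_prop : V → Option V) (r x : V)
    (hroot : prnt r = none)
    (htree : ∀ v, Relation.ReflTransGen (fun a b => prnt a = some b) v r)
    (hpath : Relation.ReflTransGen (fun a b => out_prop a = some b) r x)
    (hchild : ∀ a b, out_prop a = some b → prnt b = some a)
    (hxend : out_prop x = none) :
    newPrnt prnt out_prop r x x = none ∧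
    (∀ v, Relation.ReflTransGen
      (fun a b => newPrnt prnt out_prop r x a = some b) v x) ∧
    (∀ a b,
      (newPrnt prnt out_prop r x a = some b ∨ newPrnt prnt out_prop r x b = some a) ↔
      (prnt a = some b ∨ prnt b = some a)) := by
  refine ⟨by rw [newPrnt_eq hxend, if_pos hpath, hxend], reflTransGen_newPrnt hxend hpath htree,
    fun a b => ⟨?_, ?_⟩⟩
  · rintro (h | h)
    · exact prnt_of_newPrnt_eq_some hxend hchild h
    · exact (prnt_of_newPrnt_eq_some hxend hchild h).symm
  · rintro (h | h)
    · exact newPrnt_of_prnt_eq_some hxend hroot hchild h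
    · exact (newPrnt_of_prnt_eq_some hxend hroot hchild h).symm
end
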